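/- arXiv:2512.06618 — 2 statements merged into one kernel-verified Lean document; each statement's English description precedes it below -/
import Mathlib

section
/- Let A be a nonzero m×n complex matrix and B a nonzero n×m complex matrix, let ‖·‖₁ be a unitarily invariant norm on complex m×n matrices and ‖·‖₂ a unitarily invariant norm on complex n×m matrices, and let H₁ be an m×m Hermitian matrix and H₂ an n×n Hermitian matrix. Then the function t ↦ log(‖e^{tH₁} A e^{-tH₂}‖₁) + log(‖e^{tH₂} B e^{-tH₁}‖₂) is convex on ℝ; that is, the log of the cross condition number κ(XAY⁻¹, YBX⁻¹) = ‖XAY⁻¹‖₁·‖YBX⁻¹‖₂ is geodesically convex. -/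
open Matrix

/-- The matrix exponential of a square complex matrix. -/
noncomputable def mexp {k : ℕ} (A : Matrix (Fin k) (Fin k) ℂ) : Matrix (Fin k) (Fin k) ℂ :=
  NormedSpace.exp A

/-- `N` is a unitarily invariant matrix norm on `m × n` complex matrices:
it is a norm and satisfies `N (U * A * V) = N A` for all unitary `U`, `V`. -/
structure IsUnitarilyInvariantNorm (m n : ℕ) (N : Matrix (Fin m) (Fin n) ℂ → ℝ) : Prop where
  eq_zero_iff : ∀ A, N A = 0 ↔ A = 0
  smul : ∀ (c : ℂ) (A), N (c • A) = ‖c‖ * N A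
  triangle : ∀ A B, N (A + B) ≤ N A + N B
  unitary_inv : ∀ (U : Matrix (Fin m) (Fin m) ℂ) (V : Matrix (Fin n) (Fin n) ℂ),
    U ∈ Matrix.unitaryGroup (Fin m) ℂ → V ∈ Matrix.unitaryGroup (Fin n) ℂ →
    ∀ A, N (U * A * V) = N A

/-!
For Hermitian `H`, `K` the matrix function `z ↦ e^{zH} A e^{-zK}` is entire, and for real `y` the
factors `e^{iyH}`, `e^{-iyK}` are unitary, so its norm under a unitarily invariant norm depends only
on `Re z`. Hadamard's three lines theorem on the strip `s ≤ Re z ≤ t` then bounds the norm at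
`(1 - b) s + b t` by the `(1 - b, b)`-weighted geometric mean of the norms at `s` and `t`: the
logarithm of the norm is convex in `t`. The log cross condition number is a sum of two such terms.
-/

open Complex Complex.HadamardThreeLines

section ThreeLines

variable {E : Type*} [NormedAddCommGroup E] [NormedSpace ℂ E] {f : ℂ → E}

theorem norm_le_interp_of_norm_eq_norm_re (hf : Differentiable ℂ f)
    (hre : ∀ z : ℂ, ‖f z‖ = ‖f z.re‖) {s t : ℝ} (hst : s < t) {z : ℂ}
    (hz : z ∈ verticalClosedStrip s t) :
    ‖f z‖ ≤ ‖f s‖ ^ (1 - (z.re - s) / (t - s)) * ‖f t‖ ^ ((z.re - s) / (t - s)) := by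
  have hbdd : BddAbove ((norm ∘ f) '' verticalClosedStrip s t) := by
    refine ((isCompact_Icc (a := s) (b := t)).image
      (hf.continuous.comp continuous_ofReal).norm).bddAbove.mono ?_
    rintro - ⟨w, hw, rfl⟩
    exact ⟨w.re, hw, (hre w).symm⟩
  refine norm_le_interp_of_mem_verticalClosedStrip' hst hz hf.diffContOnCl hbdd ?_ ?_ <;>
  · rintro w rfl
    exact (hre w).le

theorem convexOn_log_norm_of_norm_eq_norm_re (hf : Differentiable ℂ f)
    (hre : ∀ z : ℂ, ‖f z‖ = ‖f z.re‖) (hf₀ : ∀ t : ℝ, f t ≠ 0) :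
    ConvexOn ℝ Set.univ (fun t : ℝ => Real.log ‖f t‖) := by
  refine LinearOrder.convexOn_of_lt convex_univ fun s _ t _ hst a b _ hb hab => ?_
  obtain rfl : a = 1 - b := by linarith
  have hpos (x : ℝ) : 0 < ‖f x‖ := norm_pos_iff.2 (hf₀ x)
  have hz : (((1 - b) • s + b • t : ℝ) : ℂ) ∈ verticalClosedStrip s t := by
    simp only [verticalClosedStrip, smul_eq_mul, Set.mem_preimage, ofReal_re, Set.mem_Icc]
    constructor <;> nlinarith
  have hweight : ((1 - b) • s + b • t - s) / (t - s) = b := by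
    rw [div_eq_iff (sub_ne_zero.2 hst.ne'), smul_eq_mul, smul_eq_mul]
    ring
  have hinterp := norm_le_interp_of_norm_eq_norm_re hf hre hst hz
  rw [ofReal_re, hweight] at hinterp
  calc Real.log ‖f ↑((1 - b) • s + b • t)‖ ≤ Real.log (‖f s‖ ^ (1 - b) * ‖f t‖ ^ b) :=
        Real.log_le_log (hpos _) hinterp
    _ = (1 - b) • Real.log ‖f s‖ + b • Real.log ‖f t‖ := by
        rw [Real.log_mul (Real.rpow_pos_of_pos (hpos s) _).ne' (Real.rpow_pos_of_pos (hpos t) b).ne',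
          Real.log_rpow (hpos s), Real.log_rpow (hpos t), smul_eq_mul, smul_eq_mul]

end ThreeLines

section MatrixExp

variable {k : ℕ} {M : Matrix (Fin k) (Fin k) ℂ}

theorem mexp_add_smul (M : Matrix (Fin k) (Fin k) ℂ) (w z : ℂ) :
    mexp ((w + z) • M) = mexp (w • M) * mexp (z • M) := by
  rw [mexp, mexp, mexp, add_smul]
  exact Matrix.exp_add_of_commute _ _ (((Commute.refl M).smul_left w).smul_right z)

theorem mexp_zero_smul (M : Matrix (Fin k) (Fin k) ℂ) : mexp ((0 : ℂ) • M) = 1 := by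
  rw [zero_smul, mexp, NormedSpace.exp_zero]

theorem mexp_smul_mul_mexp_neg_smul (M : Matrix (Fin k) (Fin k) ℂ) (z : ℂ) :
    mexp (z • M) * mexp ((-z) • M) = 1 := by
  rw [← mexp_add_smul, add_neg_cancel, mexp_zero_smul]

theorem Matrix.IsHermitian.conjTranspose_mexp_smul (hM : M.IsHermitian) (z : ℂ) :
    (mexp (z • M))ᴴ = mexp (star z • M) := by
  rw [mexp, mexp, ← Matrix.exp_conjTranspose, conjTranspose_smul, hM.eq]

theorem Matrix.IsHermitian.mexp_smul_mem_unitaryGroup (hM : M.IsHermitian) {c : ℂ}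
    (hc : star c = -c) : mexp (c • M) ∈ unitaryGroup (Fin k) ℂ := by
  rw [mem_unitaryGroup_iff, star_eq_conjTranspose, hM.conjTranspose_mexp_smul, hc,
    mexp_smul_mul_mexp_neg_smul]

end MatrixExp

section ExpConj

variable {m n : ℕ} (H : Matrix (Fin m) (Fin m) ℂ) (K : Matrix (Fin n) (Fin n) ℂ)
  (A : Matrix (Fin m) (Fin n) ℂ)

noncomputable def expConj (z : ℂ) : Matrix (Fin m) (Fin n) ℂ :=
  mexp (z • H) * A * mexp ((-z) • K)

theorem expConj_zero : expConj H K A 0 = A := by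
  rw [expConj, neg_zero, mexp_zero_smul, mexp_zero_smul, Matrix.one_mul, Matrix.mul_one]

theorem expConj_add (w z : ℂ) :
    expConj H K A (w + z) = mexp (w • H) * expConj H K A z * mexp ((-w) • K) := by
  simp only [expConj, neg_add_rev, mexp_add_smul, Matrix.mul_assoc]

variable {A} in
theorem expConj_ne_zero (hA : A ≠ 0) (z : ℂ) : expConj H K A z ≠ 0 := by
  intro h
  have hback := expConj_add H K A (-z) z
  rw [neg_add_cancel, expConj_zero, h, Matrix.mul_zero, Matrix.zero_mul] at hback
  exact hA hback

section Differentiable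

attribute [local instance] Matrix.linftyOpNormedRing Matrix.linftyOpNormedAlgebra

theorem differentiable_expConj {E : Type*} [NormedAddCommGroup E] [NormedSpace ℂ E]
    (e : Matrix (Fin m) (Fin n) ℂ →ₗ[ℂ] E) : Differentiable ℂ fun z => e (expConj H K A z) := by
  let β : Matrix (Fin m) (Fin m) ℂ →ₗ[ℂ] Matrix (Fin n) (Fin n) ℂ →ₗ[ℂ] E :=
    (LinearMap.mk₂ ℂ (fun X Y => X * A * Y) (fun _ _ _ => by simp [Matrix.add_mul])
      (fun _ _ _ => by simp) (fun _ _ _ => by simp [Matrix.mul_add]) (fun _ _ _ => by simp)).compr₂ e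
  have hexp {k : ℕ} (M : Matrix (Fin k) (Fin k) ℂ) : Differentiable ℂ fun z : ℂ => mexp (z • M) :=
    fun z => (hasDerivAt_exp_smul_const M z).differentiableAt
  have hK : Differentiable ℂ fun z : ℂ => mexp ((-z) • K) := (hexp K).comp differentiable_neg
  exact (β.toContinuousBilinearMap.isBoundedBilinearMap.differentiable.comp ((hexp H).prodMk hK) :)

end Differentiable

end ExpConj

namespace IsUnitarilyInvariantNorm

variable {m n : ℕ} {N : Matrix (Fin m) (Fin n) ℂ → ℝ}

def toAddGroupNorm (hN : IsUnitarilyInvariantNorm m n N) :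
    AddGroupNorm (Matrix (Fin m) (Fin n) ℂ) where
  toFun := N
  map_zero' := (hN.eq_zero_iff 0).2 rfl
  add_le' := hN.triangle
  neg' X := by simpa using hN.smul (-1) X
  eq_zero_of_map_eq_zero' X := (hN.eq_zero_iff X).1

-- Indexed by the proof `hN`, so that the norm `N` can be installed by global instances.
def NormedMatrix (_ : IsUnitarilyInvariantNorm m n N) : Type := Matrix (Fin m) (Fin n) ℂ

variable {hN : IsUnitarilyInvariantNorm m n N}

instance : AddCommGroup hN.NormedMatrix := inferInstanceAs (AddCommGroup (Matrix (Fin m) (Fin n) ℂ))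

instance : Module ℂ hN.NormedMatrix := inferInstanceAs (Module ℂ (Matrix (Fin m) (Fin n) ℂ))

instance : NormedAddCommGroup hN.NormedMatrix :=
  AddGroupNorm.toNormedAddCommGroup (E := hN.NormedMatrix) hN.toAddGroupNorm

instance : NormedSpace ℂ hN.NormedMatrix := ⟨fun c X => (hN.smul c X).le⟩

variable (hN) in
def toNormedMatrix : Matrix (Fin m) (Fin n) ℂ ≃ₗ[ℂ] hN.NormedMatrix := LinearEquiv.refl ℂ _

variable {H : Matrix (Fin m) (Fin m) ℂ} {K : Matrix (Fin n) (Fin n) ℂ}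

theorem apply_expConj_eq_re (hN : IsUnitarilyInvariantNorm m n N) (hH : H.IsHermitian)
    (hK : K.IsHermitian) (A : Matrix (Fin m) (Fin n) ℂ) (z : ℂ) :
    N (expConj H K A z) = N (expConj H K A z.re) := by
  have hc : star ((z.im : ℂ) * I) = -((z.im : ℂ) * I) := by simp
  conv_lhs => rw [← re_add_im z, add_comm, expConj_add]
  exact hN.unitary_inv _ _ (hH.mexp_smul_mem_unitaryGroup hc)
    (hK.mexp_smul_mem_unitaryGroup (by rw [star_neg, hc])) _

theorem convexOn_log_expConj (hN : IsUnitarilyInvariantNorm m n N)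
    {A : Matrix (Fin m) (Fin n) ℂ} (hA : A ≠ 0) (hH : H.IsHermitian) (hK : K.IsHermitian) :
    ConvexOn ℝ Set.univ fun t : ℝ => Real.log (N (expConj H K A t)) :=
  convexOn_log_norm_of_norm_eq_norm_re (f := fun z => hN.toNormedMatrix (expConj H K A z))
    (differentiable_expConj H K A hN.toNormedMatrix.toLinearMap)
    (hN.apply_expConj_eq_re hH hK A)
    (fun t => hN.toNormedMatrix.map_ne_zero_iff.2 (expConj_ne_zero H K hA t))

end IsUnitarilyInvariantNorm

/-- The log of the cross condition number,
`t ↦ log ‖e^{tH₁} A e^{-tH₂}‖₁ + log ‖e^{tH₂} B e^{-tH₁}‖₂`, is convex on `ℝ`. -/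
theorem logCrossConditionNumber_convex (m n : ℕ)
    (A : Matrix (Fin m) (Fin n) ℂ) (B : Matrix (Fin n) (Fin m) ℂ)
    (hA : A ≠ 0) (hB : B ≠ 0)
    (N₁ : Matrix (Fin m) (Fin n) ℂ → ℝ) (N₂ : Matrix (Fin n) (Fin m) ℂ → ℝ)
    (hN₁ : IsUnitarilyInvariantNorm m n N₁) (hN₂ : IsUnitarilyInvariantNorm n m N₂)
    (H₁ : Matrix (Fin m) (Fin m) ℂ) (H₂ : Matrix (Fin n) (Fin n) ℂ)
    (hH₁ : H₁.IsHermitian) (hH₂ : H₂.IsHermitian) :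
    ConvexOn ℝ Set.univ (fun t : ℝ =>
      Real.log (N₁ (mexp ((t : ℂ) • H₁) * A * mexp ((-t : ℂ) • H₂))) +
      Real.log (N₂ (mexp ((t : ℂ) • H₂) * B * mexp ((-t : ℂ) • H₁)))) := by
  exact (hN₁.convexOn_log_expConj hA hH₁ hH₂).add (hN₂.convexOn_log_expConj hB hH₂ hH₁)
end

section
/- (Strong convexity of the log-Frobenius-condition number on a sublevel set.) Let A be an invertible m×m complex matrix and let X be an invertible m×m complex matrix satisfying κ_F(XA) ≤ κ_F(A). Then, for every Hermitian m×m complex matrix H with tr(H) = 0, the function φ(t) = log κ_F(e^{tH} X A) is twice differentiable at t = 0 and φ''(0) ≥ 4·‖H‖_F² / κ_F(A)². -/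
open Matrix

/-- The Frobenius norm `‖A‖_F = √(tr(A*A))` of a complex matrix. -/
noncomputable def frob {m n : ℕ} (A : Matrix (Fin m) (Fin n) ℂ) : ℝ :=
  Real.sqrt (Matrix.trace (Aᴴ * A)).re

/-- The Frobenius condition number `κ_F(A) = ‖A‖_F · ‖A⁻¹‖_F`. -/
noncomputable def kappaF {k : ℕ} (A : Matrix (Fin k) (Fin k) ℂ) : ℝ :=
  frob A * frob A⁻¹

/-!
Write `B = XA`. As `e^{tH}` is Hermitian, `‖(e^{tH}B)⁻¹‖_F = ‖e^{-tH}B⁻ᴴ‖_F`, so `φ` is the sum of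
`t ↦ log ‖e^{tH}B‖_F` and `t ↦ log ‖e^{-tH}B⁻ᴴ‖_F`, and `κ_F(B⁻ᴴ) = κ_F(B)`.

For Hermitian `K` and invertible `M`, `log ‖e^{tK}M‖_F = ½ log tr(M* e^{2tK} M)` has second
derivative `2 (‖KM‖_F² - p²/‖M‖_F²) / ‖M‖_F²` at `0`, where `p = Re tr(M* K M)`. The bracket is the
minimum over real `c` of `‖(K - c)M‖_F²`, which is at least `‖K - c‖_F² / ‖M⁻¹‖_F²`, and
`‖K - c‖_F² = ‖K‖_F² + c² m ≥ ‖K‖_F²` when `K` is traceless. So each summand contributes at least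
`2‖H‖_F²/κ_F(B)²`, and `κ_F(B) ≤ κ_F(A)`.
-/

section Frobenius

variable {a b c m : ℕ}

theorem re_trace_conjTranspose_mul_self (M : Matrix (Fin a) (Fin b) ℂ) :
    (trace (Mᴴ * M)).re = ∑ j, ∑ i, ‖M i j‖ ^ 2 := by
  simp only [trace, diag, mul_apply, conjTranspose_apply, Complex.re_sum, RCLike.star_def,
    ← Complex.normSq_eq_conj_mul_self, Complex.normSq_eq_norm_sq, Complex.ofReal_re]

theorem frob_sq (M : Matrix (Fin a) (Fin b) ℂ) : frob M ^ 2 = (trace (Mᴴ * M)).re :=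
  Real.sq_sqrt (by rw [re_trace_conjTranspose_mul_self]; positivity)

section Norm

attribute [local instance] Matrix.frobeniusNormedAddCommGroup

theorem frob_eq_norm (M : Matrix (Fin a) (Fin b) ℂ) : frob M = ‖M‖ := by
  rw [frobenius_norm_def, frob, re_trace_conjTranspose_mul_self, Finset.sum_comm,
    Real.sqrt_eq_rpow]
  simp only [Real.rpow_two]

theorem frob_nonneg (M : Matrix (Fin a) (Fin b) ℂ) : 0 ≤ frob M :=
  Real.sqrt_nonneg _

theorem frob_pos {M : Matrix (Fin a) (Fin b) ℂ} (hM : M ≠ 0) : 0 < frob M := by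
  rwa [frob_eq_norm, norm_pos_iff]

theorem frob_neg (M : Matrix (Fin a) (Fin b) ℂ) : frob (-M) = frob M := by
  rw [frob_eq_norm, frob_eq_norm, norm_neg]

theorem frob_conjTranspose (M : Matrix (Fin a) (Fin b) ℂ) : frob Mᴴ = frob M := by
  rw [frob_eq_norm, frob_eq_norm, frobenius_norm_conjTranspose]

theorem frob_mul_le (M : Matrix (Fin a) (Fin b) ℂ) (N : Matrix (Fin b) (Fin c) ℂ) :
    frob (M * N) ≤ frob M * frob N := by
  simpa only [frob_eq_norm] using frobenius_norm_mul M N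

end Norm

theorem frob_le_frob_mul_mul_frob_inv {M : Matrix (Fin m) (Fin m) ℂ} (hM : IsUnit M)
    (N : Matrix (Fin a) (Fin m) ℂ) : frob N ≤ frob (N * M) * frob M⁻¹ := by
  calc frob N = frob (N * M * M⁻¹) := by
        rw [mul_nonsing_inv_cancel_right _ _ ((isUnit_iff_isUnit_det M).mp hM)]
    _ ≤ frob (N * M) * frob M⁻¹ := frob_mul_le _ _

theorem kappaF_pos [NeZero m] {M : Matrix (Fin m) (Fin m) ℂ} (hM : IsUnit M) :
    0 < kappaF M :=
  mul_pos (frob_pos hM.ne_zero) (frob_pos (isUnit_nonsing_inv_iff.mpr hM).ne_zero)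

theorem kappaF_conjTranspose_inv {M : Matrix (Fin m) (Fin m) ℂ} (hM : IsUnit M) :
    kappaF M⁻¹ᴴ = kappaF M := by
  have hdet : IsUnit Mᴴ.det := by
    rw [det_conjTranspose]; exact ((isUnit_iff_isUnit_det M).mp hM).star
  rw [kappaF, kappaF, conjTranspose_nonsing_inv, nonsing_inv_nonsing_inv _ hdet,
    ← conjTranspose_nonsing_inv, frob_conjTranspose, frob_conjTranspose, mul_comm]

end Frobenius

section Traceless

variable {m : ℕ} {H : Matrix (Fin m) (Fin m) ℂ}

theorem frob_sq_le_frob_sub_smul_one_sq (htr : trace H = 0) (c : ℝ) :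
    frob H ^ 2 ≤ frob (H - (c : ℂ) • 1) ^ 2 := by
  have hexpand : (H - (c : ℂ) • 1)ᴴ * (H - (c : ℂ) • 1)
      = Hᴴ * H - (c : ℂ) • (Hᴴ + H) + ((c ^ 2 : ℝ) : ℂ) • 1 := by
    simp only [conjTranspose_sub, conjTranspose_smul, conjTranspose_one, Complex.star_def,
      Complex.conj_ofReal, Matrix.sub_mul, Matrix.mul_sub, Matrix.smul_mul, Matrix.mul_smul,
      Matrix.one_mul, Matrix.mul_one, Complex.ofReal_pow]
    module
  rw [frob_sq, frob_sq, hexpand]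
  simp only [trace_add, trace_sub, trace_smul, trace_one, trace_conjTranspose, htr, star_zero,
    add_zero, mul_zero, sub_zero, smul_eq_mul, Complex.add_re, Complex.re_ofReal_mul,
    Complex.natCast_re, Fintype.card_fin]
  exact le_add_of_nonneg_right (by positivity)

theorem frob_sub_smul_one_mul_sq (hH : H.IsHermitian) (M : Matrix (Fin m) (Fin m) ℂ) (c : ℝ) :
    frob ((H - (c : ℂ) • 1) * M) ^ 2
      = frob (H * M) ^ 2 - 2 * c * (trace (Mᴴ * H * M)).re + c ^ 2 * frob M ^ 2 := by
  have hexpand : ((H - (c : ℂ) • 1) * M)ᴴ * ((H - (c : ℂ) • 1) * M)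
      = (H * M)ᴴ * (H * M) - ((2 * c : ℝ) : ℂ) • (Mᴴ * H * M)
        + ((c ^ 2 : ℝ) : ℂ) • (Mᴴ * M) := by
    simp only [conjTranspose_mul, conjTranspose_sub, conjTranspose_smul, hH.eq,
      Complex.star_def, Complex.conj_ofReal, Matrix.sub_mul, Matrix.mul_sub, Matrix.smul_mul,
      Matrix.mul_smul, Matrix.one_mul, Matrix.mul_assoc, Complex.ofReal_pow, Complex.ofReal_mul,
      Complex.ofReal_ofNat]
    module
  rw [frob_sq, frob_sq, frob_sq, hexpand]
  simp only [trace_add, trace_sub, trace_smul, smul_eq_mul, Complex.sub_re, Complex.add_re,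
    Complex.re_ofReal_mul]

theorem frob_sq_div_frob_inv_sq_le [NeZero m] {M : Matrix (Fin m) (Fin m) ℂ} (hM : IsUnit M)
    (hH : H.IsHermitian) (htr : trace H = 0) :
    frob H ^ 2 / frob M⁻¹ ^ 2 ≤ frob (H * M) ^ 2 - (trace (Mᴴ * H * M)).re ^ 2 / frob M ^ 2 := by
  set p := (trace (Mᴴ * H * M)).re
  have hM₀ : 0 < frob M := frob_pos hM.ne_zero
  have hM₁ : 0 < frob M⁻¹ := frob_pos (isUnit_nonsing_inv_iff.mpr hM).ne_zero
  set c := p / frob M ^ 2 with hc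
  have hmin : frob (H * M) ^ 2 - p ^ 2 / frob M ^ 2 = frob ((H - (c : ℂ) • 1) * M) ^ 2 := by
    rw [frob_sub_smul_one_mul_sq hH, hc]
    field_simp
    ring
  rw [hmin, div_le_iff₀ (by positivity), ← mul_pow]
  calc frob H ^ 2 ≤ frob (H - (c : ℂ) • 1) ^ 2 := frob_sq_le_frob_sub_smul_one_sq htr c
    _ ≤ (frob ((H - (c : ℂ) • 1) * M) * frob M⁻¹) ^ 2 :=
      pow_le_pow_left₀ (frob_nonneg _) (frob_le_frob_mul_mul_frob_inv hM _) 2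

theorem two_mul_frob_sq_div_kappaF_sq_le [NeZero m] {M : Matrix (Fin m) (Fin m) ℂ}
    (hM : IsUnit M) (hH : H.IsHermitian) (htr : trace H = 0) :
    2 * frob H ^ 2 / kappaF M ^ 2 ≤ (4 * frob (H * M) ^ 2 * frob M ^ 2
      - (2 * (trace (Mᴴ * H * M)).re) ^ 2) / (frob M ^ 2) ^ 2 / 2 := by
  have hM₀ : 0 < frob M := frob_pos hM.ne_zero
  have hM₁ : 0 < frob M⁻¹ := frob_pos (isUnit_nonsing_inv_iff.mpr hM).ne_zero
  calc 2 * frob H ^ 2 / kappaF M ^ 2 = 2 * (frob H ^ 2 / frob M⁻¹ ^ 2) / frob M ^ 2 := by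
        rw [kappaF]; ring
    _ ≤ 2 * (frob (H * M) ^ 2 - (trace (Mᴴ * H * M)).re ^ 2 / frob M ^ 2) / frob M ^ 2 := by
      gcongr
      exact frob_sq_div_frob_inv_sq_le hM hH htr
    _ = _ := by
      field_simp
      ring

end Traceless

section Exponential

variable {m : ℕ} {H : Matrix (Fin m) (Fin m) ℂ}

theorem isUnit_mexp (K : Matrix (Fin m) (Fin m) ℂ) : IsUnit (mexp K) :=
  Matrix.isUnit_exp K

theorem mexp_zero : mexp (0 : Matrix (Fin m) (Fin m) ℂ) = 1 :=
  NormedSpace.exp_zero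

theorem isHermitian_mexp_smul (hH : H.IsHermitian) (t : ℝ) :
    (mexp ((t : ℂ) • H)).IsHermitian := by
  rw [IsHermitian, mexp, ← Matrix.exp_conjTranspose, conjTranspose_smul, hH.eq,
    Complex.star_def, Complex.conj_ofReal]

theorem inv_mexp_smul (t : ℝ) : (mexp ((t : ℂ) • H))⁻¹ = mexp ((t : ℂ) • -H) := by
  rw [smul_neg, mexp, mexp, Matrix.exp_neg]

theorem mexp_smul_mul_self (t : ℝ) :
    mexp ((t : ℂ) • H) * mexp ((t : ℂ) • H) = mexp ((t : ℂ) • ((2 : ℂ) • H)) := by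
  rw [smul_comm, two_smul, mexp, mexp, ← Matrix.exp_add_of_commute _ _ (Commute.refl _)]

theorem hasDerivAt_re_trace_mul_mexp_smul_mul (P K Q : Matrix (Fin m) (Fin m) ℂ) (t : ℝ) :
    HasDerivAt (fun u : ℝ => (trace (P * mexp ((u : ℂ) • K) * Q)).re)
      (trace (P * K * mexp ((t : ℂ) • K) * Q)).re t := by
  let _ := Matrix.frobeniusNormedRing (m := Fin m) (α := ℂ)
  let _ := Matrix.frobeniusNormedAlgebra (m := Fin m) (R := ℝ) (α := ℂ)
  let ψ : Matrix (Fin m) (Fin m) ℂ →L[ℝ] ℝ :=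
    Complex.reCLM.comp (LinearMap.toContinuousLinearMap
      ((traceLinearMap (Fin m) ℂ ℂ).restrictScalars ℝ))
  have h := ψ.hasFDerivAt.comp_hasDerivAt t
    (((hasDerivAt_exp_smul_const' (𝕂 := ℝ) K t).const_mul P).mul_const Q)
  simp only [mexp, Complex.coe_smul, mul_assoc] at h ⊢
  exact h

theorem frob_mexp_smul_mul_sq (hH : H.IsHermitian) (t : ℝ) (M : Matrix (Fin m) (Fin m) ℂ) :
    frob (mexp ((t : ℂ) • H) * M) ^ 2
      = (trace (Mᴴ * mexp ((t : ℂ) • ((2 : ℂ) • H)) * M)).re := by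
  rw [frob_sq, conjTranspose_mul, (isHermitian_mexp_smul hH t).eq, ← mexp_smul_mul_self,
    Matrix.mul_assoc, Matrix.mul_assoc, Matrix.mul_assoc]

theorem frob_inv_mexp_smul_mul (hH : H.IsHermitian) (t : ℝ) (M : Matrix (Fin m) (Fin m) ℂ) :
    frob (mexp ((t : ℂ) • H) * M)⁻¹ = frob (mexp ((t : ℂ) • -H) * M⁻¹ᴴ) := by
  rw [Matrix.mul_inv_rev, inv_mexp_smul, ← frob_conjTranspose, conjTranspose_mul,
    (isHermitian_mexp_smul hH.neg t).eq]

theorem log_kappaF_mexp_smul_mul [NeZero m] (hH : H.IsHermitian) {M : Matrix (Fin m) (Fin m) ℂ}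
    (hM : IsUnit M) (t : ℝ) :
    Real.log (kappaF (mexp ((t : ℂ) • H) * M))
      = Real.log (frob (mexp ((t : ℂ) • H) * M))
        + Real.log (frob (mexp ((t : ℂ) • -H) * M⁻¹ᴴ)) := by
  have hU : IsUnit (mexp ((t : ℂ) • H) * M) := (isUnit_mexp _).mul hM
  rw [kappaF, Real.log_mul (frob_pos hU.ne_zero).ne'
    (frob_pos (isUnit_nonsing_inv_iff.mpr hU).ne_zero).ne', frob_inv_mexp_smul_mul hH]

end Exponential

theorem deriv_deriv_eq_of_hasDerivAt {f f' : ℝ → ℝ} {x v : ℝ} (hf : ∀ t, HasDerivAt f (f' t) t)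
    (hf' : HasDerivAt f' v x) :
    DifferentiableAt ℝ f x ∧ DifferentiableAt ℝ (deriv f) x ∧ deriv (deriv f) x = v := by
  have hderiv : deriv f = f' := funext fun t => (hf t).deriv
  exact ⟨(hf x).differentiableAt, hderiv ▸ hf'.differentiableAt, hderiv ▸ hf'.deriv⟩

theorem exists_hasDerivAt_log_frob_mexp_smul_mul [NeZero m] {H M : Matrix (Fin m) (Fin m) ℂ}
    (hM : IsUnit M) (hH : H.IsHermitian) (htr : trace H = 0) :
    ∃ (L' : ℝ → ℝ) (v : ℝ),
      (∀ t, HasDerivAt (fun t : ℝ => Real.log (frob (mexp ((t : ℂ) • H) * M))) (L' t) t) ∧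
      HasDerivAt L' v 0 ∧ 2 * frob H ^ 2 / kappaF M ^ 2 ≤ v := by
  set K := (2 : ℂ) • H
  set Q : ℝ → ℝ := fun t => frob (mexp ((t : ℂ) • H) * M) ^ 2
  set Q₁ : ℝ → ℝ := fun t => (trace (Mᴴ * K * mexp ((t : ℂ) • K) * M)).re
  have hQ_eq : Q = fun t : ℝ => (trace (Mᴴ * mexp ((t : ℂ) • K) * M)).re :=
    funext fun t => frob_mexp_smul_mul_sq hH t M
  have hQ (t : ℝ) : HasDerivAt Q (Q₁ t) t := hQ_eq ▸ hasDerivAt_re_trace_mul_mexp_smul_mul _ _ _ t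
  have hQ₁ : HasDerivAt Q₁ (trace (Mᴴ * K * K * mexp (((0 : ℝ) : ℂ) • K) * M)).re 0 :=
    hasDerivAt_re_trace_mul_mexp_smul_mul _ _ _ 0
  have hQ_pos (t : ℝ) : 0 < Q t := pow_pos (frob_pos ((isUnit_mexp _).mul hM).ne_zero) 2
  have hlog : (fun t : ℝ => Real.log (frob (mexp ((t : ℂ) • H) * M)))
      = fun t => Real.log (Q t) / 2 :=
    funext fun t => by rw [Real.log_pow]; ring
  refine ⟨fun t => Q₁ t / Q t / 2, _, fun t => hlog ▸ ((hQ t).log (hQ_pos t).ne').div_const 2,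
    (hQ₁.div (hQ 0) (hQ_pos 0).ne').div_const 2, ?_⟩
  have hQ0 : Q 0 = frob M ^ 2 := by simp [Q, mexp_zero]
  have hQ₁0 : Q₁ 0 = 2 * (trace (Mᴴ * H * M)).re := by simp [Q₁, K, mexp_zero]
  have hQ₂0 : (trace (Mᴴ * K * K * mexp (((0 : ℝ) : ℂ) • K) * M)).re = 4 * frob (H * M) ^ 2 := by
    rw [Complex.ofReal_zero, zero_smul, mexp_zero, Matrix.mul_one, frob_sq, conjTranspose_mul,
      hH.eq]
    simp only [K, smul_mul_assoc, mul_smul_comm, smul_smul, trace_smul, Matrix.mul_assoc]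
    norm_num
  rw [hQ₂0, hQ0, hQ₁0, ← sq]
  exact two_mul_frob_sq_div_kappaF_sq_le hM hH htr

/-- **Strong convexity of the log-Frobenius condition number on a sublevel set.**
If `A` is invertible and `X` is invertible with `κ_F(XA) ≤ κ_F(A)`, then for every
traceless Hermitian `H`, the function `φ(t) = log κ_F(e^{tH} X A)` is twice
differentiable at `0` and `φ''(0) ≥ 4‖H‖_F²/κ_F(A)²`. -/
theorem strong_convexity_log_kappaF (m : ℕ) (A X : Matrix (Fin m) (Fin m) ℂ)
    (hA : IsUnit A) (hX : IsUnit X) (hsub : kappaF (X * A) ≤ kappaF A)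
    (H : Matrix (Fin m) (Fin m) ℂ) (hH : H.IsHermitian) (htr : Matrix.trace H = 0) :
    let φ : ℝ → ℝ := fun t => Real.log (kappaF (mexp ((t : ℂ) • H) * X * A))
    DifferentiableAt ℝ φ 0 ∧ DifferentiableAt ℝ (deriv φ) 0 ∧
      4 * frob H ^ 2 / kappaF A ^ 2 ≤ deriv (deriv φ) 0 := by
  intro φ
  obtain rfl | hm := m.eq_zero_or_pos
  · have hφ : φ = fun _ => 0 := funext fun t => by simp [φ, kappaF, frob]
    simp [hφ, frob]
  have : NeZero m := ⟨hm.ne'⟩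
  have hB : IsUnit (X * A) := hX.mul hA
  obtain ⟨L₁, v₁, hL₁, hv₁, hb₁⟩ := exists_hasDerivAt_log_frob_mexp_smul_mul hB hH htr
  obtain ⟨L₂, v₂, hL₂, hv₂, hb₂⟩ := exists_hasDerivAt_log_frob_mexp_smul_mul
    (show IsUnit (X * A)⁻¹ᴴ from (isUnit_nonsing_inv_iff.mpr hB).star) hH.neg
    (by rw [trace_neg, htr, neg_zero])
  rw [frob_neg, kappaF_conjTranspose_inv hB] at hb₂
  have hφ : φ = fun t : ℝ => Real.log (frob (mexp ((t : ℂ) • H) * (X * A)))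
      + Real.log (frob (mexp ((t : ℂ) • -H) * (X * A)⁻¹ᴴ)) :=
    funext fun t => by rw [← log_kappaF_mexp_smul_mul hH hB, ← Matrix.mul_assoc]
  obtain ⟨hφ₁, hφ₂, hφ₃⟩ :=
    deriv_deriv_eq_of_hasDerivAt (fun t => hφ ▸ (hL₁ t).fun_add (hL₂ t)) (hv₁.add hv₂)
  refine ⟨hφ₁, hφ₂, hφ₃ ▸ ?_⟩
  have hκ : 0 < kappaF (X * A) := kappaF_pos hB
  calc 4 * frob H ^ 2 / kappaF A ^ 2 ≤ 4 * frob H ^ 2 / kappaF (X * A) ^ 2 :=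
        div_le_div_of_nonneg_left (by positivity) (pow_pos hκ 2) (pow_le_pow_left₀ hκ.le hsub 2)
    _ = 2 * frob H ^ 2 / kappaF (X * A) ^ 2 + 2 * frob H ^ 2 / kappaF (X * A) ^ 2 := by ring
    _ ≤ v₁ + v₂ := add_le_add hb₁ hb₂
end
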